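/- Let p, e, s : (0,∞)² → ℝ with e and s twice continuously differentiable and p continuously differentiable, satisfying Gibbs' equation on (0,∞)², and suppose ∂_ϱ p(ϱ,ϑ) > 0 and ∂_ϑ e(ϱ,ϑ) > 0 for all ϱ, ϑ > 0. Fix 0 < ϱ̲ < ϱ̄ and 0 < ϑ̲ < ϑ̄. Then there exists a constant c > 0 such that for all (ϱ,ϑ) and (r,Θ) in the rectangle [ϱ̲,ϱ̄] × [ϑ̲,ϑ̄], the relative entropy satisfies E(ϱ,ϑ | r,Θ) ≥ c·(|ϱ − r|² + |ϑ − Θ|²). -/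

import Mathlib

/-!
Write `E(ϱ,ϑ | r,Θ)` as `[H_Θ(ϱ,ϑ) − H_Θ(ϱ,Θ)] + [H_Θ(ϱ,Θ) − H_Θ(r,Θ) − ∂_ϱ H_Θ(r,Θ)·(ϱ − r)]`.
By Gibbs' equation `∂_ϑ H_Θ(ϱ,ϑ) = (ϱ ∂_ϑ e / ϑ)·(ϑ − Θ)`, so the first bracket is at least
`m₁/2·(ϑ − Θ)²` where `m₁` bounds `ϱ ∂_ϑ e / ϑ` from below. Along `ϑ = Θ`, `∂_ϱ H_Θ` is the
Gibbs energy `e − Θ s + p/ϱ`, whose `ϱ`-derivative is `∂_ϱ p / ϱ`; so the second bracket, a Taylor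
remainder, is at least `m₂/2·(ϱ − r)²` where `m₂` bounds `∂_ϱ p / ϱ` from below. By thermodynamic
stability both coefficients are positive and continuous, hence have positive lower bounds on the
compact rectangle.
-/

open Set

section OneVariable

variable {f f' : ℝ → ℝ} {lo hi a x m : ℝ}

theorem monotoneOn_Icc_of_hasDerivAt_nonneg {u v : ℝ}
    (hf : ∀ t ∈ Icc u v, HasDerivAt f (f' t) t) (hf' : ∀ t ∈ Ioo u v, 0 ≤ f' t) :
    MonotoneOn f (Icc u v) := by
  refine monotoneOn_of_hasDerivWithinAt_nonneg (f' := f') (convex_Icc u v)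
    (fun t ht => (hf t ht).continuousAt.continuousWithinAt) (fun t ht => ?_) ?_
  · rw [interior_Icc] at ht ⊢
    exact (hf t (Ioo_subset_Icc_self ht)).hasDerivWithinAt
  · rwa [interior_Icc]

theorem le_of_hasDerivAt_nonpos_left_nonneg_right
    (ha : a ∈ Icc lo hi) (hx : x ∈ Icc lo hi) (hf : ∀ t ∈ Icc lo hi, HasDerivAt f (f' t) t)
    (hleft : ∀ t ∈ Icc lo hi, t ≤ a → f' t ≤ 0) (hright : ∀ t ∈ Icc lo hi, a ≤ t → 0 ≤ f' t) :
    f a ≤ f x := by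
  rcases le_total a x with hax | hxa
  · have hsub : Icc a x ⊆ Icc lo hi := Icc_subset_Icc ha.1 hx.2
    refine monotoneOn_Icc_of_hasDerivAt_nonneg (fun t ht => hf t (hsub ht))
      (fun t ht => hright t (hsub (Ioo_subset_Icc_self ht)) ht.1.le)
      (left_mem_Icc.2 hax) (right_mem_Icc.2 hax) hax
  · have hsub : Icc x a ⊆ Icc lo hi := Icc_subset_Icc hx.1 ha.2
    have hmono := monotoneOn_Icc_of_hasDerivAt_nonneg (f := -f) (fun t ht => (hf t (hsub ht)).neg)
      (fun t ht => neg_nonneg.2 (hleft t (hsub (Ioo_subset_Icc_self ht)) ht.2.le))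
    exact neg_le_neg_iff.1 (hmono (left_mem_Icc.2 hxa) (right_mem_Icc.2 hxa) hxa)

theorem sq_mul_le_sub_of_hasDerivAt_mul_sub {g : ℝ → ℝ}
    (ha : a ∈ Icc lo hi) (hx : x ∈ Icc lo hi)
    (hf : ∀ t ∈ Icc lo hi, HasDerivAt f (g t * (t - a)) t) (hg : ∀ t ∈ Icc lo hi, m ≤ g t) :
    m / 2 * (x - a) ^ 2 ≤ f x - f a := by
  have hφ : ∀ t ∈ Icc lo hi,
      HasDerivAt (fun t => f t - m / 2 * (t - a) ^ 2) ((g t - m) * (t - a)) t := fun t ht =>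
    ((hf t ht).sub ((((hasDerivAt_id t).sub_const a).pow 2).const_mul (m / 2))).congr_deriv
      (by simp only [id_eq]; ring)
  have key := le_of_hasDerivAt_nonpos_left_nonneg_right ha hx hφ
    (fun t ht hta => mul_nonpos_of_nonneg_of_nonpos (sub_nonneg.2 (hg t ht)) (sub_nonpos.2 hta))
    (fun t ht hat => mul_nonneg (sub_nonneg.2 (hg t ht)) (sub_nonneg.2 hat))
  simp only [sub_self] at key
  linarith

theorem sq_mul_le_sub_sub_mul_of_hasDerivAt {g g' : ℝ → ℝ}
    (ha : a ∈ Icc lo hi) (hx : x ∈ Icc lo hi)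
    (hf : ∀ t ∈ Icc lo hi, HasDerivAt f (g t) t) (hg : ∀ t ∈ Icc lo hi, HasDerivAt g (g' t) t)
    (hg' : ∀ t ∈ Icc lo hi, m ≤ g' t) :
    m / 2 * (x - a) ^ 2 ≤ f x - f a - g a * (x - a) := by
  have hmono : MonotoneOn (fun t => g t - m * t) (Icc lo hi) :=
    monotoneOn_Icc_of_hasDerivAt_nonneg
      (fun t ht => (hg t ht).sub ((hasDerivAt_id t).const_mul m))
      (fun t ht => by simpa using hg' t (Ioo_subset_Icc_self ht))
  have hφ : ∀ t ∈ Icc lo hi, HasDerivAt (fun t => f t - g a * t - m / 2 * (t - a) ^ 2)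
      (g t - m * t - (g a - m * a)) t := fun t ht =>
    (((hf t ht).sub ((hasDerivAt_id t).const_mul (g a))).sub
      ((((hasDerivAt_id t).sub_const a).pow 2).const_mul (m / 2))).congr_deriv
      (by simp only [id_eq]; ring)
  have key := le_of_hasDerivAt_nonpos_left_nonneg_right ha hx hφ
    (fun t ht hta => sub_nonpos.2 (hmono ht ha hta))
    (fun t ht hat => sub_nonneg.2 (hmono ha ht hat))
  simp only [sub_self] at key
  linarith

end OneVariable

section PartialDerivatives

variable {f : ℝ → ℝ → ℝ} {U : Set (ℝ × ℝ)} {x y : ℝ}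

theorem hasDerivAt_fst_slice (hf : DifferentiableAt ℝ (fun q : ℝ × ℝ => f q.1 q.2) (x, y)) :
    HasDerivAt (fun r => f r y) (fderiv ℝ (fun q : ℝ × ℝ => f q.1 q.2) (x, y) (1, 0)) x := by
  exact hf.hasFDerivAt.comp_hasDerivAt x ((hasDerivAt_id x).prodMk (hasDerivAt_const x y))

theorem hasDerivAt_snd_slice (hf : DifferentiableAt ℝ (fun q : ℝ × ℝ => f q.1 q.2) (x, y)) :
    HasDerivAt (fun t => f x t) (fderiv ℝ (fun q : ℝ × ℝ => f q.1 q.2) (x, y) (0, 1)) y := by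
  exact hf.hasFDerivAt.comp_hasDerivAt y ((hasDerivAt_const y x).prodMk (hasDerivAt_id y))

theorem DifferentiableOn.differentiableAt_fst_slice
    (hf : DifferentiableOn ℝ (fun q : ℝ × ℝ => f q.1 q.2) U) (hU : IsOpen U) (hxy : (x, y) ∈ U) :
    DifferentiableAt ℝ (fun r => f r y) x :=
  (hasDerivAt_fst_slice (hf.differentiableAt (hU.mem_nhds hxy))).differentiableAt

theorem DifferentiableOn.differentiableAt_snd_slice
    (hf : DifferentiableOn ℝ (fun q : ℝ × ℝ => f q.1 q.2) U) (hU : IsOpen U) (hxy : (x, y) ∈ U) :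
    DifferentiableAt ℝ (fun t => f x t) y :=
  (hasDerivAt_snd_slice (hf.differentiableAt (hU.mem_nhds hxy))).differentiableAt

variable {n : WithTop ℕ∞}

theorem ContDiffOn.continuousOn_deriv_fst_slice
    (hf : ContDiffOn ℝ n (fun q : ℝ × ℝ => f q.1 q.2) U) (hU : IsOpen U) (hn : 1 ≤ n) :
    ContinuousOn (fun q : ℝ × ℝ => deriv (fun r => f r q.2) q.1) U :=
  ((hf.continuousOn_fderiv_of_isOpen hU hn).clm_apply continuousOn_const).congr fun _ hq =>
    (hasDerivAt_fst_slice
      ((hf.differentiableOn (zero_lt_one.trans_le hn).ne').differentiableAt (hU.mem_nhds hq))).deriv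

theorem ContDiffOn.continuousOn_deriv_snd_slice
    (hf : ContDiffOn ℝ n (fun q : ℝ × ℝ => f q.1 q.2) U) (hU : IsOpen U) (hn : 1 ≤ n) :
    ContinuousOn (fun q : ℝ × ℝ => deriv (fun t => f q.1 t) q.2) U :=
  ((hf.continuousOn_fderiv_of_isOpen hU hn).clm_apply continuousOn_const).congr fun _ hq =>
    (hasDerivAt_snd_slice
      ((hf.differentiableOn (zero_lt_one.trans_le hn).ne').differentiableAt (hU.mem_nhds hq))).deriv

end PartialDerivatives

/-- `H_Θ(ϱ,ϑ)`. -/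
noncomputable def ballisticFreeEnergy (e s : ℝ → ℝ → ℝ) (Θ ϱ ϑ : ℝ) : ℝ :=
  ϱ * e ϱ ϑ - Θ * (ϱ * s ϱ ϑ)

noncomputable def gibbsEnergy (p e s : ℝ → ℝ → ℝ) (ϱ ϑ : ℝ) : ℝ :=
  e ϱ ϑ - ϑ * s ϱ ϑ + p ϱ ϑ / ϱ

section Thermodynamics

variable {p e s : ℝ → ℝ → ℝ} {ϱ ϑ Θ : ℝ}

theorem hasDerivAt_ballisticFreeEnergy_snd
    (he : DifferentiableAt ℝ (fun t => e ϱ t) ϑ) (hs : DifferentiableAt ℝ (fun t => s ϱ t) ϑ)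
    (hϑ : ϑ ≠ 0) (gibbs : ϑ * deriv (fun t => s ϱ t) ϑ = deriv (fun t => e ϱ t) ϑ) :
    HasDerivAt (ballisticFreeEnergy e s Θ ϱ) (ϱ * deriv (fun t => e ϱ t) ϑ / ϑ * (ϑ - Θ)) ϑ := by
  refine ((he.hasDerivAt.const_mul ϱ).sub
    ((hs.hasDerivAt.const_mul ϱ).const_mul Θ)).congr_deriv ?_
  field_simp
  linear_combination (-Θ * ϱ) * gibbs

theorem hasDerivAt_ballisticFreeEnergy_fst
    (he : DifferentiableAt ℝ (fun r => e r Θ) ϱ) (hs : DifferentiableAt ℝ (fun r => s r Θ) ϱ)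
    (hϱ : ϱ ≠ 0)
    (gibbs : Θ * deriv (fun r => s r Θ) ϱ = deriv (fun r => e r Θ) ϱ - p ϱ Θ / ϱ ^ 2) :
    HasDerivAt (fun r => ballisticFreeEnergy e s Θ r Θ) (gibbsEnergy p e s ϱ Θ) ϱ := by
  refine (((hasDerivAt_id ϱ).mul he.hasDerivAt).sub
    (((hasDerivAt_id ϱ).mul hs.hasDerivAt).const_mul Θ)).congr_deriv ?_
  simp only [gibbsEnergy, id_eq]
  field_simp at gibbs ⊢
  linear_combination -gibbs

theorem hasDerivAt_gibbsEnergy_fst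
    (hp : DifferentiableAt ℝ (fun r => p r ϑ) ϱ) (he : DifferentiableAt ℝ (fun r => e r ϑ) ϱ)
    (hs : DifferentiableAt ℝ (fun r => s r ϑ) ϱ) (hϱ : ϱ ≠ 0)
    (gibbs : ϑ * deriv (fun r => s r ϑ) ϱ = deriv (fun r => e r ϑ) ϱ - p ϱ ϑ / ϱ ^ 2) :
    HasDerivAt (fun r => gibbsEnergy p e s r ϑ) (deriv (fun r => p r ϑ) ϱ / ϱ) ϱ := by
  refine ((he.hasDerivAt.sub (hs.hasDerivAt.const_mul ϑ)).add
    (hp.hasDerivAt.div (hasDerivAt_id ϱ) hϱ)).congr_deriv ?_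
  simp only [id_eq]
  field_simp at gibbs ⊢
  linear_combination -gibbs

variable {lo hi m : ℝ}

theorem sq_mul_le_ballisticFreeEnergy_sub
    (he : DifferentiableOn ℝ (fun q : ℝ × ℝ => e q.1 q.2) (Ioi 0 ×ˢ Ioi 0))
    (hs : DifferentiableOn ℝ (fun q : ℝ × ℝ => s q.1 q.2) (Ioi 0 ×ˢ Ioi 0))
    (gibbs_temp : ∀ ϱ ϑ : ℝ, 0 < ϱ → 0 < ϑ →
      ϑ * deriv (fun t => s ϱ t) ϑ = deriv (fun t => e ϱ t) ϑ)
    (hϱ : 0 < ϱ) (hlo : 0 < lo) (hm : ∀ t ∈ Icc lo hi, m ≤ ϱ * deriv (fun t => e ϱ t) t / t)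
    (hϑ : ϑ ∈ Icc lo hi) (hΘ : Θ ∈ Icc lo hi) :
    m / 2 * (ϑ - Θ) ^ 2 ≤ ballisticFreeEnergy e s Θ ϱ ϑ - ballisticFreeEnergy e s Θ ϱ Θ := by
  refine sq_mul_le_sub_of_hasDerivAt_mul_sub hΘ hϑ (fun t ht => ?_) hm
  have hQ : (ϱ, t) ∈ Ioi (0 : ℝ) ×ˢ Ioi (0 : ℝ) := ⟨hϱ, hlo.trans_le ht.1⟩
  have hQ_open : IsOpen (Ioi (0 : ℝ) ×ˢ Ioi (0 : ℝ)) := isOpen_Ioi.prod isOpen_Ioi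
  exact hasDerivAt_ballisticFreeEnergy_snd (he.differentiableAt_snd_slice hQ_open hQ)
    (hs.differentiableAt_snd_slice hQ_open hQ) hQ.2.ne' (gibbs_temp ϱ t hQ.1 hQ.2)

theorem sq_mul_le_ballisticFreeEnergy_sub_sub_deriv_mul {r : ℝ}
    (hp : DifferentiableOn ℝ (fun q : ℝ × ℝ => p q.1 q.2) (Ioi 0 ×ˢ Ioi 0))
    (he : DifferentiableOn ℝ (fun q : ℝ × ℝ => e q.1 q.2) (Ioi 0 ×ˢ Ioi 0))
    (hs : DifferentiableOn ℝ (fun q : ℝ × ℝ => s q.1 q.2) (Ioi 0 ×ˢ Ioi 0))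
    (gibbs_dens : ∀ ϱ ϑ : ℝ, 0 < ϱ → 0 < ϑ →
      ϑ * deriv (fun r => s r ϑ) ϱ = deriv (fun r => e r ϑ) ϱ - p ϱ ϑ / ϱ ^ 2)
    (hΘ : 0 < Θ) (hlo : 0 < lo) (hm : ∀ x ∈ Icc lo hi, m ≤ deriv (fun r => p r Θ) x / x)
    (hϱ : ϱ ∈ Icc lo hi) (hr : r ∈ Icc lo hi) :
    m / 2 * (ϱ - r) ^ 2 ≤ ballisticFreeEnergy e s Θ ϱ Θ - ballisticFreeEnergy e s Θ r Θ
      - deriv (fun x => ballisticFreeEnergy e s Θ x Θ) r * (ϱ - r) := by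
  have hQ : ∀ x ∈ Icc lo hi, (x, Θ) ∈ Ioi (0 : ℝ) ×ˢ Ioi (0 : ℝ) := fun x hx =>
    ⟨hlo.trans_le hx.1, hΘ⟩
  have hQ_open : IsOpen (Ioi (0 : ℝ) ×ˢ Ioi (0 : ℝ)) := isOpen_Ioi.prod isOpen_Ioi
  have hH : ∀ x ∈ Icc lo hi,
      HasDerivAt (fun x => ballisticFreeEnergy e s Θ x Θ) (gibbsEnergy p e s x Θ) x :=
    fun x hx => hasDerivAt_ballisticFreeEnergy_fst (he.differentiableAt_fst_slice hQ_open (hQ x hx))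
      (hs.differentiableAt_fst_slice hQ_open (hQ x hx)) (hQ x hx).1.ne'
      (gibbs_dens x Θ (hQ x hx).1 hΘ)
  rw [(hH r hr).deriv]
  exact sq_mul_le_sub_sub_mul_of_hasDerivAt hr hϱ hH
    (fun x hx => hasDerivAt_gibbsEnergy_fst (hp.differentiableAt_fst_slice hQ_open (hQ x hx))
      (he.differentiableAt_fst_slice hQ_open (hQ x hx))
      (hs.differentiableAt_fst_slice hQ_open (hQ x hx)) (hQ x hx).1.ne'
      (gibbs_dens x Θ (hQ x hx).1 hΘ)) hm

end Thermodynamics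

theorem relative_entropy_coercive_essential_part_general
    (p e s : ℝ → ℝ → ℝ)
    (hp : ContDiffOn ℝ 1 (fun q : ℝ × ℝ => p q.1 q.2)
      (Set.Ioi (0 : ℝ) ×ˢ Set.Ioi (0 : ℝ)))
    (he : ContDiffOn ℝ 2 (fun q : ℝ × ℝ => e q.1 q.2)
      (Set.Ioi (0 : ℝ) ×ˢ Set.Ioi (0 : ℝ)))
    (hs : ContDiffOn ℝ 2 (fun q : ℝ × ℝ => s q.1 q.2)
      (Set.Ioi (0 : ℝ) ×ˢ Set.Ioi (0 : ℝ)))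
    (gibbs_temp : ∀ ϱ ϑ : ℝ, 0 < ϱ → 0 < ϑ →
      ϑ * deriv (fun t => s ϱ t) ϑ = deriv (fun t => e ϱ t) ϑ)
    (gibbs_dens : ∀ ϱ ϑ : ℝ, 0 < ϱ → 0 < ϑ →
      ϑ * deriv (fun r => s r ϑ) ϱ
        = deriv (fun r => e r ϑ) ϱ - p ϱ ϑ / ϱ ^ 2)
    (hstab_p : ∀ ϱ ϑ : ℝ, 0 < ϱ → 0 < ϑ → 0 < deriv (fun r => p r ϑ) ϱ)
    (hstab_e : ∀ ϱ ϑ : ℝ, 0 < ϱ → 0 < ϑ → 0 < deriv (fun t => e ϱ t) ϑ)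
    (ϱlo ϱhi ϑlo ϑhi : ℝ)
    (hϱlo : 0 < ϱlo) (hϑlo : 0 < ϑlo) :
    ∃ c : ℝ, 0 < c ∧
      ∀ ϱ ϑ r Θ : ℝ,
        ϱ ∈ Set.Icc ϱlo ϱhi → ϑ ∈ Set.Icc ϑlo ϑhi →
        r ∈ Set.Icc ϱlo ϱhi → Θ ∈ Set.Icc ϑlo ϑhi →
        c * (|ϱ - r| ^ 2 + |ϑ - Θ| ^ 2)
          ≤ (ϱ * e ϱ ϑ - Θ * (ϱ * s ϱ ϑ))
            - deriv (fun x => x * e x Θ - Θ * (x * s x Θ)) r * (ϱ - r)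
            - (r * e r Θ - Θ * (r * s r Θ)) := by
  have hQ : IsOpen (Ioi (0 : ℝ) ×ˢ Ioi (0 : ℝ)) := isOpen_Ioi.prod isOpen_Ioi
  have hK : IsCompact (Icc ϱlo ϱhi ×ˢ Icc ϑlo ϑhi) := isCompact_Icc.prod isCompact_Icc
  have hKQ : Icc ϱlo ϱhi ×ˢ Icc ϑlo ϑhi ⊆ Ioi 0 ×ˢ Ioi 0 :=
    prod_mono (fun _ hx => hϱlo.trans_le hx.1) fun _ hx => hϑlo.trans_le hx.1
  obtain ⟨m₁, hm₁, hm₁K⟩ := hK.exists_forall_le'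
    (((continuousOn_fst.mul (he.continuousOn_deriv_snd_slice hQ one_le_two)).div
      continuousOn_snd fun _ hq => hq.2.ne').mono hKQ)
    fun q hq => div_pos (mul_pos (hKQ hq).1 (hstab_e _ _ (hKQ hq).1 (hKQ hq).2)) (hKQ hq).2
  obtain ⟨m₂, hm₂, hm₂K⟩ := hK.exists_forall_le'
    (((hp.continuousOn_deriv_fst_slice hQ le_rfl).div continuousOn_fst
      fun _ hq => hq.1.ne').mono hKQ)
    fun q hq => div_pos (hstab_p _ _ (hKQ hq).1 (hKQ hq).2) (hKQ hq).1
  refine ⟨min m₁ m₂ / 2, by positivity, fun ϱ ϑ r Θ hϱ hϑ hr hΘ => ?_⟩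
  have htemp := sq_mul_le_ballisticFreeEnergy_sub (he.differentiableOn two_ne_zero)
    (hs.differentiableOn two_ne_zero) gibbs_temp (hϱlo.trans_le hϱ.1) hϑlo
    (fun t ht => hm₁K (ϱ, t) ⟨hϱ, ht⟩) hϑ hΘ
  have hdens := sq_mul_le_ballisticFreeEnergy_sub_sub_deriv_mul (hp.differentiableOn one_ne_zero)
    (he.differentiableOn two_ne_zero) (hs.differentiableOn two_ne_zero) gibbs_dens
    (hϑlo.trans_le hΘ.1) hϱlo (fun x hx => hm₂K (x, Θ) ⟨hx, hΘ⟩) hϱ hr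
  have key : min m₁ m₂ / 2 * ((ϱ - r) ^ 2 + (ϑ - Θ) ^ 2)
      ≤ ballisticFreeEnergy e s Θ ϱ ϑ - deriv (fun x => ballisticFreeEnergy e s Θ x Θ) r * (ϱ - r)
        - ballisticFreeEnergy e s Θ r Θ := by
    nlinarith [min_le_left m₁ m₂, min_le_right m₁ m₂, sq_nonneg (ϱ - r), sq_nonneg (ϑ - Θ)]
  rw [sq_abs, sq_abs]
  exact key

/-- Under Gibbs' equation (with `e, s` twice continuously
differentiable and `p` continuously differentiable) and thermodynamic stability
(`∂_ϱ p > 0`, `∂_ϑ e > 0`), for any rectangle `[ϱ̲,ϱ̄] × [ϑ̲,ϑ̄] ⊂ (0,∞)²` there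
is a constant `c > 0` such that the relative entropy
`E(ϱ,ϑ | r,Θ) = H_Θ(ϱ,ϑ) − ∂_ϱ H_Θ(r,Θ)·(ϱ − r) − H_Θ(r,Θ)` satisfies
`E(ϱ,ϑ | r,Θ) ≥ c·(|ϱ − r|² + |ϑ − Θ|²)` whenever `(ϱ,ϑ)` and `(r,Θ)` lie in the
rectangle. -/
theorem relative_entropy_coercive_essential_part
    (p e s : ℝ → ℝ → ℝ)
    (hp : ContDiffOn ℝ 1 (fun q : ℝ × ℝ => p q.1 q.2)
      (Set.Ioi (0 : ℝ) ×ˢ Set.Ioi (0 : ℝ)))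
    (he : ContDiffOn ℝ 2 (fun q : ℝ × ℝ => e q.1 q.2)
      (Set.Ioi (0 : ℝ) ×ˢ Set.Ioi (0 : ℝ)))
    (hs : ContDiffOn ℝ 2 (fun q : ℝ × ℝ => s q.1 q.2)
      (Set.Ioi (0 : ℝ) ×ˢ Set.Ioi (0 : ℝ)))
    (gibbs_temp : ∀ ϱ ϑ : ℝ, 0 < ϱ → 0 < ϑ →
      ϑ * deriv (fun t => s ϱ t) ϑ = deriv (fun t => e ϱ t) ϑ)
    (gibbs_dens : ∀ ϱ ϑ : ℝ, 0 < ϱ → 0 < ϑ →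
      ϑ * deriv (fun r => s r ϑ) ϱ
        = deriv (fun r => e r ϑ) ϱ - p ϱ ϑ / ϱ ^ 2)
    (hstab_p : ∀ ϱ ϑ : ℝ, 0 < ϱ → 0 < ϑ → 0 < deriv (fun r => p r ϑ) ϱ)
    (hstab_e : ∀ ϱ ϑ : ℝ, 0 < ϱ → 0 < ϑ → 0 < deriv (fun t => e ϱ t) ϑ)
    (ϱlo ϱhi ϑlo ϑhi : ℝ)
    (hϱlo : 0 < ϱlo) (hϱ : ϱlo < ϱhi) (hϑlo : 0 < ϑlo) (hϑ : ϑlo < ϑhi) :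
    ∃ c : ℝ, 0 < c ∧
      ∀ ϱ ϑ r Θ : ℝ,
        ϱ ∈ Set.Icc ϱlo ϱhi → ϑ ∈ Set.Icc ϑlo ϑhi →
        r ∈ Set.Icc ϱlo ϱhi → Θ ∈ Set.Icc ϑlo ϑhi →
        c * (|ϱ - r| ^ 2 + |ϑ - Θ| ^ 2)
          ≤ (ϱ * e ϱ ϑ - Θ * (ϱ * s ϱ ϑ))
            - deriv (fun x => x * e x Θ - Θ * (x * s x Θ)) r * (ϱ - r)
            - (r * e r Θ - Θ * (r * s r Θ)) :=
  relative_entropy_coercive_essential_part_general p e s hp he hs gibbs_temp gibbs_dens hstab_p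
    hstab_e ϱlo ϱhi ϑlo ϑhi hϱlo hϑlo
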